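/- arXiv:2304.00607 — 2 statements merged into one kernel-verified Lean document; each statement's English description precedes it below -/
import Mathlib

section
/- Fix (ε,d) ∈ {(1,1),(−1,0),(1,0)} and r ≥ r₁. For a tuple p = ([v₀],[v₁],[v₂],[v₃]) ∈ P_r^{(4)} the following are equivalent: (a) the Gram matrix (ω(v_i,v_j))_{0≤i,j≤3} is nonsingular; (b) the vectors v₀,v₁,v₂,v₃ are linearly independent and ω restricted to their span is nondegenerate (i.e. p ∈ P_r^{{4}}); (c) Δ(CR₁(p),CR₂(p)) ≠ 0. -/
/-! For any bilinear form, the Gram matrix of a family is nonsingular exactly when the family is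
independent and the form is nondegenerate on its span: a left kernel vector of the Gram matrix is
the coefficient vector of an element of the span orthogonal to the whole span.
For four isotropic vectors, ε-symmetry of ω makes the Gram matrix ε-symmetric with zero diagonal,
and its determinant is `(ω₀₁ω₂₃)² · Δ(CR₁, CR₂)`, where `ω₀₁ω₂₃ ≠ 0` by non-orthogonality. -/

noncomputable section

open scoped Classical

namespace DCM

/-- `Vc r d` is `ℂ^(2r+d)`, with coordinates taken in the ordered basis
`e_r, …, e_1, (h), f_1, …, f_r` (the middle vector `h` being present only if `d = 1`). -/
abbrev Vc (r d : ℕ) := Fin (2 * r + d) → ℂ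

/-- `e_i` for `1 ≤ i ≤ r`: the standard basis vector at position `r - i`. -/
def eV (r d i : ℕ) : Vc r d := fun k => if (k : ℕ) = r - i then 1 else 0

/-- `h`: the standard basis vector at position `r` (relevant only when `d = 1`). -/
def hV (r d : ℕ) : Vc r d := fun k => if (k : ℕ) = r then 1 else 0

/-- `f_i` for `1 ≤ i ≤ r`: the standard basis vector at position `r + d + i - 1`. -/
def fV (r d i : ℕ) : Vc r d := fun k => if (k : ℕ) = r + d + i - 1 then 1 else 0

/-- The ε-symmetric bilinear form ω on `Vc r d`, determined by `ω(e_i,f_j) = δ_ij`,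
`ω(f_i,e_j) = ε·δ_ij`, `ω(e_i,e_j) = ω(f_i,f_j) = 0`, and (when `d = 1`)
`ω(h,h) = 1` and `h` orthogonal to all `e_i`, `f_i`. -/
def om (ε : ℂ) (r d : ℕ) (v w : Vc r d) : ℂ :=
  (∑ j : Fin r,
    (v ⟨r - 1 - (j : ℕ), by have := j.isLt; omega⟩ *
        w ⟨r + d + (j : ℕ), by have := j.isLt; omega⟩ +
      ε * v ⟨r + d + (j : ℕ), by have := j.isLt; omega⟩ *
        w ⟨r - 1 - (j : ℕ), by have := j.isLt; omega⟩)) +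
  (if hd : d = 1 then v ⟨r, by omega⟩ * w ⟨r, by omega⟩ else 0)

/-- `v` is a nonzero isotropic vector, i.e. it represents a line `[v] ∈ P_r`. -/
def IsoV (ε : ℂ) (r d : ℕ) (v : Vc r d) : Prop := v ≠ 0 ∧ om ε r d v v = 0

/-- `g` lies in `G_r`, the group of linear automorphisms preserving ω. -/
def InG (ε : ℂ) (r d : ℕ) (g : Vc r d ≃ₗ[ℂ] Vc r d) : Prop :=
  ∀ v w, om ε r d (g v) (g w) = om ε r d v w

/-- The ω-cross-ratio `CR₀`. -/
def CR0 (ε : ℂ) (r d : ℕ) (v0 v1 v2 v3 : Vc r d) : ℂ :=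
  (om ε r d v0 v2 * om ε r d v1 v3) / (om ε r d v0 v3 * om ε r d v1 v2)

/-- The ω-cross-ratio `CR₁`. -/
def CR1 (ε : ℂ) (r d : ℕ) (v0 v1 v2 v3 : Vc r d) : ℂ := (CR0 ε r d v1 v2 v0 v3)⁻¹

/-- The ω-cross-ratio `CR₂`. -/
def CR2 (ε : ℂ) (r d : ℕ) (v0 v1 v2 v3 : Vc r d) : ℂ := CR0 ε r d v2 v0 v1 v3

/-- `(v0,v1,v2,v3)` represents a tuple of lines in `P_r^{(4)}`:
all lines isotropic and pairwise non-orthogonal. -/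
def Conf4 (ε : ℂ) (r d : ℕ) (v0 v1 v2 v3 : Vc r d) : Prop :=
  IsoV ε r d v0 ∧ IsoV ε r d v1 ∧ IsoV ε r d v2 ∧ IsoV ε r d v3 ∧
  om ε r d v0 v1 ≠ 0 ∧ om ε r d v0 v2 ≠ 0 ∧ om ε r d v0 v3 ≠ 0 ∧
  om ε r d v1 v2 ≠ 0 ∧ om ε r d v1 v3 ≠ 0 ∧ om ε r d v2 v3 ≠ 0

/-- `(v0,…,v4)` represents a tuple of lines in `P_r^{(5)}`. -/
def Conf5 (ε : ℂ) (r d : ℕ) (v0 v1 v2 v3 v4 : Vc r d) : Prop :=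
  Conf4 ε r d v0 v1 v2 v3 ∧ IsoV ε r d v4 ∧
  om ε r d v0 v4 ≠ 0 ∧ om ε r d v1 v4 ≠ 0 ∧ om ε r d v2 v4 ≠ 0 ∧ om ε r d v3 v4 ≠ 0

/-- ω restricted to the span of `s` is nondegenerate. -/
def NondegOn (ε : ℂ) (r d : ℕ) (s : Set (Vc r d)) : Prop :=
  ∀ x ∈ Submodule.span ℂ s, (∀ y ∈ Submodule.span ℂ s, om ε r d x y = 0) → x = 0

/-- `(v0,v1,v2,v3)` represents a tuple of lines in `P_r^{{4}}`: pairwise non-orthogonal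
isotropic lines, linearly independent, spanning a nondegenerate subspace. -/
def Gen4 (ε : ℂ) (r d : ℕ) (v0 v1 v2 v3 : Vc r d) : Prop :=
  Conf4 ε r d v0 v1 v2 v3 ∧ LinearIndependent ℂ ![v0, v1, v2, v3] ∧
  NondegOn ε r d {v0, v1, v2, v3}

/-- `(v0,…,v4)` represents a tuple of lines in `P_r^{{5}}`: every 4-element subtuple
(in the induced order) lies in `P_r^{{4}}`. -/
def Gen5 (ε : ℂ) (r d : ℕ) (v0 v1 v2 v3 v4 : Vc r d) : Prop :=
  Conf5 ε r d v0 v1 v2 v3 v4 ∧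
  Gen4 ε r d v0 v1 v2 v3 ∧ Gen4 ε r d v0 v1 v2 v4 ∧ Gen4 ε r d v0 v1 v3 v4 ∧
  Gen4 ε r d v0 v2 v3 v4 ∧ Gen4 ε r d v1 v2 v3 v4

/-- `Γ(z₁,z₂) = 1 - z₁ - z₂`. -/
def Gam (z1 z2 : ℂ) : ℂ := 1 - z1 - z2

/-- `Δ(z₁,z₂) = Γ(z₁,z₂)² - 2(1+ε)·z₁z₂`. -/
def Del (ε z1 z2 : ℂ) : ℂ := Gam z1 z2 ^ 2 - 2 * (1 + ε) * z1 * z2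

/-- `Δ^{1/2}`, relative to a fixed choice `sq` of complex square root:
`Γ` if `ε = -1`, and `sq ∘ Δ` otherwise. -/
def DelHalf (ε : ℂ) (sq : ℂ → ℂ) (z1 z2 : ℂ) : ℂ :=
  if ε = -1 then Gam z1 z2 else sq (Del ε z1 z2)

/-- `φ₊ = (Δ^{1/2} + Γ)/2`. -/
def phiP (ε : ℂ) (sq : ℂ → ℂ) (z1 z2 : ℂ) : ℂ := (DelHalf ε sq z1 z2 + Gam z1 z2) / 2

/-- `φ₋ = (Δ^{1/2} - Γ)/2`. -/
def phiM (ε : ℂ) (sq : ℂ → ℂ) (z1 z2 : ℂ) : ℂ := (DelHalf ε sq z1 z2 - Gam z1 z2) / 2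

theorem det_gram_ne_zero_iff {K M ι : Type*} [Field K] [AddCommGroup M] [Module K M]
    [Fintype ι] [DecidableEq ι] (B : M →ₗ[K] M →ₗ[K] K) (v : ι → M) :
    (Matrix.of fun i j => B (v i) (v j)).det ≠ 0 ↔
      LinearIndependent K v ∧ ∀ x ∈ Submodule.span K (Set.range v),
        (∀ y ∈ Submodule.span K (Set.range v), B x y = 0) → x = 0 := by
  set G : Matrix ι ι K := Matrix.of fun i j => B (v i) (v j)
  have mulVec_G (c : ι → K) : G.mulVec c = fun i => B (v i) (∑ j, c j • v j) := by
    ext i; simp [G, Matrix.mulVec, dotProduct, mul_comm]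
  have vecMul_G (c : ι → K) : Matrix.vecMul c G = fun j => B (∑ i, c i • v i) (v j) := by
    ext j; simp [G, Matrix.vecMul, dotProduct]
  constructor
  · intro hdet
    refine ⟨Fintype.linearIndependent_iff.mpr fun c hc i => ?_, fun x hx hperp => ?_⟩
    · by_contra hi
      refine hdet (Matrix.exists_mulVec_eq_zero_iff.mp ⟨c, fun h => hi (congrFun h i), ?_⟩)
      ext; simp [mulVec_G, hc]
    · obtain ⟨c, rfl⟩ := (Submodule.mem_span_range_iff_exists_fun K).mp hx
      by_contra hne
      refine hdet (Matrix.exists_vecMul_eq_zero_iff.mp ⟨c, fun hc => hne (by simp [hc]), ?_⟩)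
      ext j
      simpa [vecMul_G] using hperp (v j) (Submodule.subset_span ⟨j, rfl⟩)
  · rintro ⟨hli, hnd⟩ hdet
    obtain ⟨c, hc, hcG⟩ := Matrix.exists_vecMul_eq_zero_iff.mpr hdet
    have hperp : Set.range v ⊆ LinearMap.ker (B (∑ i, c i • v i)) := by
      rintro _ ⟨j, rfl⟩
      simpa [vecMul_G] using congrFun hcG j
    have hmem : ∑ i, c i • v i ∈ Submodule.span K (Set.range v) :=
      Submodule.sum_mem _ fun i _ => Submodule.smul_mem _ _ (Submodule.subset_span ⟨i, rfl⟩)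
    have hx := hnd _ hmem fun y hy => Submodule.span_le.mpr hperp hy
    exact hc (funext (Fintype.linearIndependent_iff.mp hli c hx))

-- For `ε = -1` the right-hand side is the square of the Pfaffian `az - by + cx`.
theorem det_fin_four_of_eps_symm {R : Type*} [CommRing R] {ε : R} (hε : ε = 1 ∨ ε = -1)
    (a b c x y z : R) :
    !![0, a, b, c; ε * a, 0, x, y; ε * b, ε * x, 0, z; ε * c, ε * y, ε * z, 0].det =
      (a * z - b * y - ε * c * x) ^ 2 - 2 * (1 + ε) * ε * (b * y) * (c * x) := by
  rcases hε with rfl | rfl <;>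
    simp [Matrix.det_succ_row_zero, Fin.sum_univ_succ, Fin.succAbove] <;> ring

theorem del_div_mul_sq {ε P X Y : ℂ} (hP : P ≠ 0) :
    Del ε (X / P) (ε * Y / P) * P ^ 2 = (P - X - ε * Y) ^ 2 - 2 * (1 + ε) * ε * X * Y := by
  rw [Del, Gam]
  field_simp

section Form

variable {ε : ℂ} {r d : ℕ}

variable (ε r d) in
def omBilin : Vc r d →ₗ[ℂ] Vc r d →ₗ[ℂ] ℂ :=
  LinearMap.mk₂ ℂ (om ε r d)
    (fun u v w => by
      simp only [om, Pi.add_apply, add_mul, mul_add, Finset.sum_add_distrib]; split_ifs <;> ring)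
    (fun c u w => by
      simp only [om, Pi.smul_apply, smul_eq_mul, mul_add, Finset.mul_sum]
      congr 1
      · exact Finset.sum_congr rfl fun _ _ => by ring
      · split_ifs <;> ring)
    (fun u v w => by
      simp only [om, Pi.add_apply, mul_add, Finset.sum_add_distrib]; split_ifs <;> ring)
    (fun c u w => by
      simp only [om, Pi.smul_apply, smul_eq_mul, mul_add, Finset.mul_sum]
      congr 1
      · exact Finset.sum_congr rfl fun _ _ => by ring
      · split_ifs <;> ring)

theorem om_swap (hε : ε = 1 ∨ ε = -1) (hd : d = 1 → ε = 1) (u v : Vc r d) :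
    om ε r d v u = ε * om ε r d u v := by
  simp only [om, mul_add, Finset.mul_sum]
  congr 1
  · refine Finset.sum_congr rfl fun _ _ => ?_
    rcases hε with rfl | rfl <;> ring
  · split_ifs with h
    · rw [hd h, one_mul, mul_comm]
    · rw [mul_zero]

variable {v0 v1 v2 v3 : Vc r d}

theorem gram_eq_of_isotropic (hε : ε = 1 ∨ ε = -1) (hd : d = 1 → ε = 1)
    (h0 : om ε r d v0 v0 = 0) (h1 : om ε r d v1 v1 = 0) (h2 : om ε r d v2 v2 = 0)
    (h3 : om ε r d v3 v3 = 0) :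
    (Matrix.of fun i j : Fin 4 => om ε r d (![v0, v1, v2, v3] i) (![v0, v1, v2, v3] j)) =
      !![0, om ε r d v0 v1, om ε r d v0 v2, om ε r d v0 v3;
        ε * om ε r d v0 v1, 0, om ε r d v1 v2, om ε r d v1 v3;
        ε * om ε r d v0 v2, ε * om ε r d v1 v2, 0, om ε r d v2 v3;
        ε * om ε r d v0 v3, ε * om ε r d v1 v3, ε * om ε r d v2 v3, 0] := by
  ext i j
  fin_cases i <;> fin_cases j <;>
    simp [h0, h1, h2, h3, om_swap hε hd v0 v1, om_swap hε hd v0 v2, om_swap hε hd v0 v3,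
      om_swap hε hd v1 v2, om_swap hε hd v1 v3, om_swap hε hd v2 v3]

theorem CR1_eq_div (hε : ε = 1 ∨ ε = -1) (hd : d = 1 → ε = 1) :
    CR1 ε r d v0 v1 v2 v3 =
      om ε r d v0 v2 * om ε r d v1 v3 / (om ε r d v0 v1 * om ε r d v2 v3) := by
  rw [CR1, CR0, om_swap hε hd v0 v1, om_swap hε hd v0 v2, inv_div]
  rcases hε with rfl | rfl <;> ring

theorem CR2_eq_div (hε : ε = 1 ∨ ε = -1) (hd : d = 1 → ε = 1) :
    CR2 ε r d v0 v1 v2 v3 =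
      ε * (om ε r d v0 v3 * om ε r d v1 v2) / (om ε r d v0 v1 * om ε r d v2 v3) := by
  rw [CR2, CR0, om_swap hε hd v1 v2]
  ring

end Form

theorem statement_6_general (ε : ℂ) (d : ℕ)
    (hεd : (ε = 1 ∧ d = 1) ∨ (ε = -1 ∧ d = 0) ∨ (ε = 1 ∧ d = 0))
    (r : ℕ) (v0 v1 v2 v3 : Vc r d) (hp : Conf4 ε r d v0 v1 v2 v3) :
    ((Matrix.of fun i j : Fin 4 =>
        om ε r d (![v0, v1, v2, v3] i) (![v0, v1, v2, v3] j)).det ≠ 0 ↔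
      (LinearIndependent ℂ ![v0, v1, v2, v3] ∧ NondegOn ε r d {v0, v1, v2, v3})) ∧
    ((LinearIndependent ℂ ![v0, v1, v2, v3] ∧ NondegOn ε r d {v0, v1, v2, v3}) ↔
      Del ε (CR1 ε r d v0 v1 v2 v3) (CR2 ε r d v0 v1 v2 v3) ≠ 0) := by
  have hε : ε = 1 ∨ ε = -1 := by tauto
  have hd : d = 1 → ε = 1 := by rintro rfl; simpa using hεd
  obtain ⟨⟨-, h0⟩, ⟨-, h1⟩, ⟨-, h2⟩, ⟨-, h3⟩, h01, -, -, -, -, h23⟩ := hp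
  set G : Matrix (Fin 4) (Fin 4) ℂ :=
    Matrix.of fun i j => om ε r d (![v0, v1, v2, v3] i) (![v0, v1, v2, v3] j) with hG
  have hgram : G.det ≠ 0 ↔
      LinearIndependent ℂ ![v0, v1, v2, v3] ∧ NondegOn ε r d {v0, v1, v2, v3} := by
    have hrange : Set.range ![v0, v1, v2, v3] = {v0, v1, v2, v3} := by
      simp only [Matrix.range_cons, Matrix.range_empty, Set.union_empty, Set.singleton_union]
    rw [NondegOn, ← hrange]
    exact det_gram_ne_zero_iff (omBilin ε r d) _
  have hdel : Del ε (CR1 ε r d v0 v1 v2 v3) (CR2 ε r d v0 v1 v2 v3) *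
      (om ε r d v0 v1 * om ε r d v2 v3) ^ 2 = G.det := by
    rw [CR1_eq_div hε hd, CR2_eq_div hε hd, del_div_mul_sq (mul_ne_zero h01 h23), hG,
      gram_eq_of_isotropic hε hd h0 h1 h2 h3, det_fin_four_of_eps_symm hε]
    ring
  refine ⟨hgram, hgram.symm.trans ?_⟩
  rw [← hdel, mul_ne_zero_iff, and_iff_left (pow_ne_zero 2 (mul_ne_zero h01 h23))]

/-- For a tuple in `P_r^{(4)}`, the Gram matrix is nonsingular iff the
tuple lies in `P_r^{{4}}` iff `Δ(CR₁, CR₂) ≠ 0`. -/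
theorem statement_6 (ε : ℂ) (d : ℕ)
    (hεd : (ε = 1 ∧ d = 1) ∨ (ε = -1 ∧ d = 0) ∨ (ε = 1 ∧ d = 0))
    (r : ℕ) (hr1 : 1 ≤ r) (hr2 : ε = 1 ∧ d = 0 → 2 ≤ r)
    (v0 v1 v2 v3 : Vc r d) (hp : Conf4 ε r d v0 v1 v2 v3) :
    ((Matrix.of fun i j : Fin 4 =>
        om ε r d (![v0, v1, v2, v3] i) (![v0, v1, v2, v3] j)).det ≠ 0 ↔
      (LinearIndependent ℂ ![v0, v1, v2, v3] ∧ NondegOn ε r d {v0, v1, v2, v3})) ∧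
    ((LinearIndependent ℂ ![v0, v1, v2, v3] ∧ NondegOn ε r d {v0, v1, v2, v3}) ↔
      Del ε (CR1 ε r d v0 v1 v2 v3) (CR2 ε r d v0 v1 v2 v3) ≠ 0) :=
  statement_6_general ε d hεd r v0 v1 v2 v3 hp
end DCM
end
end

section
/- Fix (ε,d) ∈ {(1,1),(−1,0),(1,0)} and r ≥ r₁. Let ([v₀],[v₁],[v₂],[v₃]) ∈ P_r^{{4}}, and let λ, μ, e′, f′ be as follows: Π = ω(v₀,v₁)·ω(v₁,v₂)·ω(v₂,v₀) with a fixed square root √Π, λ = √Π/ω(v₁,v₀), μ = λ⁻¹·ω(v₃,v₂), and e′, f′ are the unique vectors in ⟨v₀,v₁⟩^⊥ ∩ ⟨v₀,v₁,v₂,v₃⟩ with ω(e′,v₂) = λ, ω(e′,v₃) = μ·φ₋(CR₁,CR₂), ω(f′,v₂) = −λ, ω(f′,v₃) = ε·μ·φ₊(CR₁,CR₂) (cross-ratios of ([v₀],[v₁],[v₂],[v₃])). If v₄ ∈ V_r is a nonzero isotropic vector such that p = ([v₀],[v₁],[v₂],[v₃],[v₄]) ∈ P_r^{(5)}, then ω(e′,v₄)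 = ε·(ω(v₂,v₄)/λ)·ψ₋(p)/Δ^{1/2}(α₁(p),α₂(p)) and ω(f′,v₄) = (ω(v₂,v₄)/λ)·ψ₊(p)/Δ^{1/2}(α₁(p),α₂(p)), where ψ_η(p) = η·φ_η(α₁(p),α₂(p))·Γ(β₁(p),β₂(p)) + (α₂(p)·β₁(p)/γ₁(p))·Γ(γ₁(p),γ₂(p)) for η ∈ {+1,−1}. -/
noncomputable section

open scoped Classical

namespace LinearMap.BilinForm

open Submodule

variable {K M : Type*} [Field K] [AddCommGroup M] [Module K M] (B : LinearMap.BilinForm K M)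

theorem apply_eq_zero_of_mem_span {s : Set M} {x : M} (h : ∀ v ∈ s, B x v = 0) {y : M}
    (hy : y ∈ span K s) : B x y = 0 :=
  LinearMap.eqOn_span (f := B x) (g := 0) h hy

theorem eq_of_forall_apply_eq {s : Set M}
    (hs : ∀ x ∈ span K s, (∀ y ∈ span K s, B x y = 0) → x = 0) {e e' : M}
    (he : e ∈ span K s) (he' : e' ∈ span K s) (h : ∀ v ∈ s, B e v = B e' v) : e = e' :=
  sub_eq_zero.mp <| hs _ (sub_mem he he') fun _ hy =>
    B.apply_eq_zero_of_mem_span (fun v hv => by simp [h v hv]) hy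

theorem det_gram_ne_zero {ι : Type*} [Fintype ι] [DecidableEq ι] {v : ι → M}
    (hv : LinearIndependent K v)
    (hs : ∀ x ∈ span K (Set.range v), (∀ y ∈ span K (Set.range v), B x y = 0) → x = 0) :
    (Matrix.of fun i j => B (v i) (v j)).det ≠ 0 := by
  intro h
  obtain ⟨c, hc0, hc⟩ := Matrix.exists_vecMul_eq_zero_iff.mpr h
  have hsum : ∑ i, c i • v i = 0 := by
    refine hs _ (sum_mem fun i _ => smul_mem _ _ (subset_span (Set.mem_range_self i)))
      fun y hy => B.apply_eq_zero_of_mem_span ?_ hy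
    rintro _ ⟨j, rfl⟩
    simpa [Matrix.vecMul, dotProduct] using congrFun hc j
  exact hc0 (funext (Fintype.linearIndependent_iff.mp hv c hsum))

/-- For a hyperbolic pair `(v₀, v₁)`, the projection onto `⟨v₀, v₁⟩^⊥` along `⟨v₀, v₁⟩`. -/
def perpProj (v₀ v₁ x : M) : M := x - (B x v₁ / B v₀ v₁) • v₀ - (B x v₀ / B v₁ v₀) • v₁

variable {B}

theorem perpProj_apply (v₀ v₁ x y : M) :
    B (B.perpProj v₀ v₁ x) y = B x y - B x v₁ / B v₀ v₁ * B v₀ y - B x v₀ / B v₁ v₀ * B v₁ y := by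
  simp [perpProj]

theorem perpProj_apply_fst {v₀ v₁ : M} (h₀ : B v₀ v₀ = 0) (h₁₀ : B v₁ v₀ ≠ 0) (x : M) :
    B (B.perpProj v₀ v₁ x) v₀ = 0 := by
  simp [perpProj_apply, h₀, h₁₀]

theorem perpProj_apply_snd {v₀ v₁ : M} (h₁ : B v₁ v₁ = 0) (h₀₁ : B v₀ v₁ ≠ 0) (x : M) :
    B (B.perpProj v₀ v₁ x) v₁ = 0 := by
  simp [perpProj_apply, h₁, h₀₁]

theorem perpProj_mem {p : Submodule K M} {v₀ v₁ x : M} (h₀ : v₀ ∈ p) (h₁ : v₁ ∈ p) (hx : x ∈ p) :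
    B.perpProj v₀ v₁ x ∈ p :=
  sub_mem (sub_mem hx (smul_mem _ _ h₀)) (smul_mem _ _ h₁)

end LinearMap.BilinForm

namespace DCM

theorem om_add_left (ε : ℂ) (r d : ℕ) (u v w : Vc r d) :
    om ε r d (u + v) w = om ε r d u w + om ε r d v w := by
  rw [om, om, om, add_add_add_comm, ← Finset.sum_add_distrib]
  congr 1
  · exact Finset.sum_congr rfl fun _ _ => by simp only [Pi.add_apply]; ring
  · split_ifs
    · simp only [Pi.add_apply]; ring
    · ring

theorem om_add_right (ε : ℂ) (r d : ℕ) (u v w : Vc r d) :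
    om ε r d u (v + w) = om ε r d u v + om ε r d u w := by
  rw [om, om, om, add_add_add_comm, ← Finset.sum_add_distrib]
  congr 1
  · exact Finset.sum_congr rfl fun _ _ => by simp only [Pi.add_apply]; ring
  · split_ifs
    · simp only [Pi.add_apply]; ring
    · ring

theorem om_smul_left (ε : ℂ) (r d : ℕ) (a : ℂ) (v w : Vc r d) :
    om ε r d (a • v) w = a • om ε r d v w := by
  rw [om, om, smul_eq_mul, mul_add, Finset.mul_sum]
  congr 1
  · exact Finset.sum_congr rfl fun _ _ => by simp only [Pi.smul_apply, smul_eq_mul]; ring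
  · split_ifs
    · simp only [Pi.smul_apply, smul_eq_mul]; ring
    · ring

theorem om_smul_right (ε : ℂ) (r d : ℕ) (a : ℂ) (v w : Vc r d) :
    om ε r d v (a • w) = a • om ε r d v w := by
  rw [om, om, smul_eq_mul, mul_add, Finset.mul_sum]
  congr 1
  · exact Finset.sum_congr rfl fun _ _ => by simp only [Pi.smul_apply, smul_eq_mul]; ring
  · split_ifs
    · simp only [Pi.smul_apply, smul_eq_mul]; ring
    · ring

def omForm (ε : ℂ) (r d : ℕ) : LinearMap.BilinForm ℂ (Vc r d) :=
  LinearMap.mk₂ ℂ (om ε r d) (om_add_left ε r d) (om_smul_left ε r d) (om_add_right ε r d)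
    (om_smul_right ε r d)

theorem om_comm {ε : ℂ} {r d : ℕ} (hε : ε * ε = 1) (hd : d = 1 → ε = 1) (v w : Vc r d) :
    om ε r d v w = ε * om ε r d w v := by
  simp only [om, mul_add, Finset.mul_sum]
  congr 1
  · refine Finset.sum_congr rfl fun j _ => ?_
    linear_combination -(v ⟨r - 1 - j, by omega⟩ * w ⟨r + d + j, by omega⟩) * hε
  · split_ifs with h
    · rw [hd h]; ring
    · ring

theorem omForm_apply (ε : ℂ) (r d : ℕ) (v w : Vc r d) : omForm ε r d v w = om ε r d v w := rfl

theorem DelHalf_sq {sq : ℂ → ℂ} (hsq : ∀ z, sq z ^ 2 = z) (ε z1 z2 : ℂ) :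
    DelHalf ε sq z1 z2 ^ 2 = Del ε z1 z2 := by
  unfold DelHalf
  split_ifs with h
  · simp [h, Del]
  · exact hsq _

theorem two_mul_phiP_mul_phiM {sq : ℂ → ℂ} (hsq : ∀ z, sq z ^ 2 = z) (ε z1 z2 : ℂ) :
    2 * phiP ε sq z1 z2 * phiM ε sq z1 z2 = -(1 + ε) * z1 * z2 := by
  have h := DelHalf_sq hsq ε z1 z2
  unfold Del at h
  unfold phiP phiM
  linear_combination h / 2

theorem one_sub_mul_phiM {ε : ℂ} (hε : ε * ε = 1) (sq : ℂ → ℂ) (z1 z2 : ℂ) :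
    (1 - ε) * phiM ε sq z1 z2 = 0 := by
  rcases mul_self_eq_one_iff.mp hε with rfl | rfl
  · ring
  · simp [phiM, DelHalf]

section Configuration

open LinearMap.BilinForm

variable {ε : ℂ} {r d : ℕ}

theorem CR1_eq (hε : ε * ε = 1) (hd : d = 1 → ε = 1) (v0 v1 v2 v3 : Vc r d) :
    CR1 ε r d v0 v1 v2 v3 =
      om ε r d v0 v2 * om ε r d v1 v3 / (om ε r d v0 v1 * om ε r d v2 v3) := by
  have hε0 : ε ≠ 0 := left_ne_zero_of_mul_eq_one hε
  rw [CR1, CR0, om_comm hε hd v1 v0, om_comm hε hd v2 v0, inv_div]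
  field_simp

theorem CR2_eq (hε : ε * ε = 1) (hd : d = 1 → ε = 1) (v0 v1 v2 v3 : Vc r d) :
    CR2 ε r d v0 v1 v2 v3 =
      ε * om ε r d v1 v2 * om ε r d v0 v3 / (om ε r d v2 v3 * om ε r d v0 v1) := by
  rw [CR2, CR0, om_comm hε hd v2 v1]

theorem det_gram_four (ε n g02 g03 g12 g13 g23 : ℂ) (hε : ε * ε = 1) (hn : n ≠ 0)
    (h23 : g23 ≠ 0) :
    !![0, n, g02, g03; ε * n, 0, g12, g13; ε * g02, ε * g12, 0, g23;
        ε * g03, ε * g13, ε * g23, 0].det =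
      (n * g23) ^ 2 * Del ε (g02 * g13 / (n * g23)) (ε * g12 * g03 / (g23 * n)) := by
  rw [Matrix.det_succ_row_zero]
  simp [Fin.sum_univ_succ, Matrix.det_fin_three, Fin.succAbove, Del, Gam]
  field_simp
  linear_combination
    (n ^ 2 * g23 ^ 2 - 2 * n * g23 * g13 * g02 + g13 ^ 2 * g02 ^ 2 - ε * n * g23 * g12 * g03) * hε

theorem DelHalf_CR_ne_zero (hε : ε * ε = 1) (hd : d = 1 → ε = 1) {sq : ℂ → ℂ}
    (hsq : ∀ z, sq z ^ 2 = z) {v0 v1 v2 v3 : Vc r d} (hp : Gen4 ε r d v0 v1 v2 v3) :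
    DelHalf ε sq (CR1 ε r d v0 v1 v2 v3) (CR2 ε r d v0 v1 v2 v3) ≠ 0 := by
  rw [← pow_ne_zero_iff two_ne_zero, DelHalf_sq hsq]
  obtain ⟨⟨⟨-, h00⟩, ⟨-, h11⟩, ⟨-, h22⟩, ⟨-, h33⟩, h01, -, -, -, -, h23⟩, hli, hnd⟩ := hp
  have hrange : Set.range ![v0, v1, v2, v3] = {v0, v1, v2, v3} := by
    ext; simp; tauto
  have hdet := (omForm ε r d).det_gram_ne_zero hli (hrange ▸ hnd)
  have hgram : (Matrix.of fun i j => omForm ε r d (![v0, v1, v2, v3] i) (![v0, v1, v2, v3] j)) =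
      !![0, om ε r d v0 v1, om ε r d v0 v2, om ε r d v0 v3;
        ε * om ε r d v0 v1, 0, om ε r d v1 v2, om ε r d v1 v3;
        ε * om ε r d v0 v2, ε * om ε r d v1 v2, 0, om ε r d v2 v3;
        ε * om ε r d v0 v3, ε * om ε r d v1 v3, ε * om ε r d v2 v3, 0] := by
    ext i j
    fin_cases i <;> fin_cases j <;> simp [omForm, h00, h11, h22, h33, om_comm hε hd _ v0,
      om_comm hε hd v2 v1, om_comm hε hd v3 v1, om_comm hε hd v3 v2]
  rw [hgram, det_gram_four ε _ _ _ _ _ _ hε h01 h23, ← CR1_eq hε hd, ← CR2_eq hε hd] at hdet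
  exact right_ne_zero_of_mul hdet

theorem om_perpProj (v0 v1 x y : Vc r d) :
    om ε r d ((omForm ε r d).perpProj v0 v1 x) y = om ε r d x y -
      om ε r d x v1 / om ε r d v0 v1 * om ε r d v0 y -
      om ε r d x v0 / om ε r d v1 v0 * om ε r d v1 y :=
  (omForm ε r d).perpProj_apply v0 v1 x y

/-- The coefficient of the second projection is `λ² / ω(v₂, v₃)`. -/
def adaptedVec (ε : ℂ) (r d : ℕ) (v0 v1 v2 v3 : Vc r d) (φ : ℂ) : Vc r d :=
  φ • (omForm ε r d).perpProj v0 v1 v2 +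
    (ε * om ε r d v0 v2 * om ε r d v1 v2 / (om ε r d v0 v1 * om ε r d v2 v3)) •
      (omForm ε r d).perpProj v0 v1 v3

theorem om_adaptedVec_v2 (hε : ε * ε = 1) (hd : d = 1 → ε = 1) {v0 v1 v2 v3 : Vc r d}
    (hp : Conf4 ε r d v0 v1 v2 v3) (φ : ℂ) :
    om ε r d (adaptedVec ε r d v0 v1 v2 v3 φ) v2 =
      om ε r d v0 v2 * om ε r d v1 v2 / om ε r d v0 v1 *
        (Gam (CR1 ε r d v0 v1 v2 v3) (CR2 ε r d v0 v1 v2 v3) - (1 + ε) * φ) := by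
  obtain ⟨-, -, ⟨-, h22⟩, -, h01, -, -, -, -, h23⟩ := hp
  have hε0 : ε ≠ 0 := left_ne_zero_of_mul_eq_one hε
  simp only [adaptedVec, om_add_left, om_smul_left, om_perpProj, smul_eq_mul, CR1_eq hε hd,
    CR2_eq hε hd, Gam, h22, om_comm hε hd _ v0, om_comm hε hd v2 v1, om_comm hε hd v3 v1,
    om_comm hε hd v3 v2]
  field_simp
  linear_combination om ε r d v0 v2 * om ε r d v1 v2 *
    (om ε r d v0 v1 * om ε r d v2 v3 - om ε r d v0 v2 * om ε r d v1 v3) * hε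

theorem om_adaptedVec_v3 (hε : ε * ε = 1) (hd : d = 1 → ε = 1) {v0 v1 v2 v3 : Vc r d}
    (hp : Conf4 ε r d v0 v1 v2 v3) (φ : ℂ) :
    om ε r d (adaptedVec ε r d v0 v1 v2 v3 φ) v3 =
      om ε r d v2 v3 * (φ * Gam (CR1 ε r d v0 v1 v2 v3) (CR2 ε r d v0 v1 v2 v3) -
        (1 + ε) * CR1 ε r d v0 v1 v2 v3 * CR2 ε r d v0 v1 v2 v3) := by
  obtain ⟨-, -, -, ⟨-, h33⟩, h01, -, -, -, -, h23⟩ := hp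
  have hε0 : ε ≠ 0 := left_ne_zero_of_mul_eq_one hε
  simp only [adaptedVec, om_add_left, om_smul_left, om_perpProj, smul_eq_mul, CR1_eq hε hd,
    CR2_eq hε hd, Gam, h33, om_comm hε hd _ v0, om_comm hε hd v2 v1, om_comm hε hd v3 v1]
  field_simp
  ring

theorem om_adaptedVec_v4 (hε : ε * ε = 1) (hd : d = 1 → ε = 1) {v0 v1 v2 v3 v4 : Vc r d}
    (hp : Conf5 ε r d v0 v1 v2 v3 v4) (φ : ℂ) :
    om ε r d (adaptedVec ε r d v0 v1 v2 v3 φ) v4 =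
      om ε r d v2 v4 * (φ * Gam (CR1 ε r d v0 v1 v2 v4) (CR2 ε r d v0 v1 v2 v4) +
        CR2 ε r d v0 v1 v2 v3 * CR1 ε r d v0 v1 v2 v4 / CR1 ε r d v0 v1 v3 v4 *
          Gam (CR1 ε r d v0 v1 v3 v4) (CR2 ε r d v0 v1 v3 v4)) := by
  obtain ⟨⟨-, -, -, -, h01, h02, h03, h12, h13, h23⟩, -, -, h14, h24, h34⟩ := hp
  have hε0 : ε ≠ 0 := left_ne_zero_of_mul_eq_one hε
  simp only [adaptedVec, om_add_left, om_smul_left, om_perpProj, smul_eq_mul, CR1_eq hε hd,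
    CR2_eq hε hd, Gam, om_comm hε hd _ v0, om_comm hε hd v2 v1, om_comm hε hd v3 v1]
  field_simp
  ring

theorem adaptedVec_mem_span (ε : ℂ) (v0 v1 v2 v3 : Vc r d) (φ : ℂ) :
    adaptedVec ε r d v0 v1 v2 v3 φ ∈ Submodule.span ℂ ({v0, v1, v2, v3} : Set (Vc r d)) := by
  have hv {v : Vc r d} (hv : v ∈ ({v0, v1, v2, v3} : Set (Vc r d))) :=
    Submodule.subset_span (R := ℂ) hv
  refine add_mem (Submodule.smul_mem _ _ ?_) (Submodule.smul_mem _ _ ?_) <;>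
    exact perpProj_mem (hv (by simp)) (hv (by simp)) (hv (by simp))

theorem om_adaptedVec_v0 (hε : ε * ε = 1) (hd : d = 1 → ε = 1) {v0 v1 v2 v3 : Vc r d}
    (hp : Conf4 ε r d v0 v1 v2 v3) (φ : ℂ) : om ε r d (adaptedVec ε r d v0 v1 v2 v3 φ) v0 = 0 := by
  obtain ⟨⟨-, h00⟩, -, -, -, h01, -⟩ := hp
  have h10 : om ε r d v1 v0 ≠ 0 := by
    rw [om_comm hε hd]; exact mul_ne_zero (left_ne_zero_of_mul_eq_one hε) h01
  have h (x : Vc r d) : om ε r d ((omForm ε r d).perpProj v0 v1 x) v0 = 0 :=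
    (omForm ε r d).perpProj_apply_fst h00 h10 x
  simp only [adaptedVec, om_add_left, om_smul_left, h, smul_zero, add_zero]

theorem om_adaptedVec_v1 {v0 v1 v2 v3 : Vc r d} (hp : Conf4 ε r d v0 v1 v2 v3) (φ : ℂ) :
    om ε r d (adaptedVec ε r d v0 v1 v2 v3 φ) v1 = 0 := by
  obtain ⟨-, ⟨-, h11⟩, -, -, h01, -⟩ := hp
  have h (x : Vc r d) : om ε r d ((omForm ε r d).perpProj v0 v1 x) v1 = 0 :=
    (omForm ε r d).perpProj_apply_snd h11 h01 x
  simp only [adaptedVec, om_add_left, om_smul_left, h, smul_zero, add_zero]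

theorem eq_smul_adaptedVec (hε : ε * ε = 1) (hd : d = 1 → ε = 1) {v0 v1 v2 v3 : Vc r d}
    (hp : Gen4 ε r d v0 v1 v2 v3) {e : Vc r d}
    (he : e ∈ Submodule.span ℂ ({v0, v1, v2, v3} : Set (Vc r d)))
    (he0 : om ε r d v0 e = 0) (he1 : om ε r d v1 e = 0) {k φ : ℂ}
    (he2 : om ε r d e v2 = k * om ε r d (adaptedVec ε r d v0 v1 v2 v3 φ) v2)
    (he3 : om ε r d e v3 = k * om ε r d (adaptedVec ε r d v0 v1 v2 v3 φ) v3) :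
    e = k • adaptedVec ε r d v0 v1 v2 v3 φ := by
  refine (omForm ε r d).eq_of_forall_apply_eq hp.2.2 he
    (Submodule.smul_mem _ k (adaptedVec_mem_span ε v0 v1 v2 v3 φ)) ?_
  simp only [Set.mem_insert_iff, Set.mem_singleton_iff, forall_eq_or_imp, forall_eq, map_smul,
    LinearMap.smul_apply, omForm_apply, smul_eq_mul, om_comm hε hd e v0, om_comm hε hd e v1,
    om_adaptedVec_v0 hε hd hp.1, om_adaptedVec_v1 hp.1, he0, he1, mul_zero]
  exact ⟨trivial, trivial, he2, he3⟩

theorem sq_mul_om_of_sq_eq (hε : ε * ε = 1) (hd : d = 1 → ε = 1) {v0 v1 v2 : Vc r d}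
    (h01 : om ε r d v0 v1 ≠ 0) {sPi lam : ℂ}
    (hsPi : sPi ^ 2 = om ε r d v0 v1 * om ε r d v1 v2 * om ε r d v2 v0)
    (hlam : lam = sPi / om ε r d v1 v0) :
    lam ^ 2 * om ε r d v0 v1 = ε * om ε r d v0 v2 * om ε r d v1 v2 := by
  have hε0 : ε ≠ 0 := left_ne_zero_of_mul_eq_one hε
  rw [hlam, div_pow, hsPi, om_comm hε hd v1 v0, om_comm hε hd v2 v0]
  field_simp
  linear_combination -(om ε r d v0 v2 * om ε r d v1 v2) * hε

theorem eq_smul_adaptedVec_phiM (hε : ε * ε = 1) (hd : d = 1 → ε = 1) {sq : ℂ → ℂ}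
    (hsq : ∀ z, sq z ^ 2 = z) {v0 v1 v2 v3 : Vc r d} (hp : Gen4 ε r d v0 v1 v2 v3) {lam : ℂ}
    (hlam : lam ^ 2 * om ε r d v0 v1 = ε * om ε r d v0 v2 * om ε r d v1 v2) (hlam0 : lam ≠ 0)
    {e : Vc r d}
    (he : e ∈ Submodule.span ℂ ({v0, v1, v2, v3} : Set (Vc r d)))
    (he0 : om ε r d v0 e = 0) (he1 : om ε r d v1 e = 0) (he2 : om ε r d e v2 = lam)
    (he3 : om ε r d e v3 =
      ε * om ε r d v2 v3 / lam * phiM ε sq (CR1 ε r d v0 v1 v2 v3) (CR2 ε r d v0 v1 v2 v3)) :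
    e = (ε / (lam * DelHalf ε sq (CR1 ε r d v0 v1 v2 v3) (CR2 ε r d v0 v1 v2 v3))) •
      adaptedVec ε r d v0 v1 v2 v3
        (-phiM ε sq (CR1 ε r d v0 v1 v2 v3) (CR2 ε r d v0 v1 v2 v3)) := by
  have hφ := one_sub_mul_phiM hε sq (CR1 ε r d v0 v1 v2 v3) (CR2 ε r d v0 v1 v2 v3)
  have hφφ := two_mul_phiP_mul_phiM hsq ε (CR1 ε r d v0 v1 v2 v3) (CR2 ε r d v0 v1 v2 v3)
  have h01 : om ε r d v0 v1 ≠ 0 := hp.1.2.2.2.2.1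
  have hD := DelHalf_CR_ne_zero hε hd hsq hp
  refine eq_smul_adaptedVec hε hd hp he he0 he1 ?_ ?_
  · rw [he2, om_adaptedVec_v2 hε hd hp.1]
    unfold phiM at *
    field_simp
    linear_combination 2 * DelHalf ε sq _ _ * hlam + 2 * ε * om ε r d v0 v2 * om ε r d v1 v2 * hφ
  · rw [he3, om_adaptedVec_v3 hε hd hp.1]
    unfold phiM phiP at *
    field_simp
    linear_combination 2 * ε * om ε r d v2 v3 * hφφ

theorem eq_smul_adaptedVec_phiP (hε : ε * ε = 1) (hd : d = 1 → ε = 1) {sq : ℂ → ℂ}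
    (hsq : ∀ z, sq z ^ 2 = z) {v0 v1 v2 v3 : Vc r d} (hp : Gen4 ε r d v0 v1 v2 v3) {lam : ℂ}
    (hlam : lam ^ 2 * om ε r d v0 v1 = ε * om ε r d v0 v2 * om ε r d v1 v2) (hlam0 : lam ≠ 0)
    {f : Vc r d}
    (hf : f ∈ Submodule.span ℂ ({v0, v1, v2, v3} : Set (Vc r d)))
    (hf0 : om ε r d v0 f = 0) (hf1 : om ε r d v1 f = 0) (hf2 : om ε r d f v2 = -lam)
    (hf3 : om ε r d f v3 =
      om ε r d v2 v3 / lam * phiP ε sq (CR1 ε r d v0 v1 v2 v3) (CR2 ε r d v0 v1 v2 v3)) :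
    f = (lam * DelHalf ε sq (CR1 ε r d v0 v1 v2 v3) (CR2 ε r d v0 v1 v2 v3))⁻¹ •
      adaptedVec ε r d v0 v1 v2 v3
        (phiP ε sq (CR1 ε r d v0 v1 v2 v3) (CR2 ε r d v0 v1 v2 v3)) := by
  have hφ := one_sub_mul_phiM hε sq (CR1 ε r d v0 v1 v2 v3) (CR2 ε r d v0 v1 v2 v3)
  have hφφ := two_mul_phiP_mul_phiM hsq ε (CR1 ε r d v0 v1 v2 v3) (CR2 ε r d v0 v1 v2 v3)
  have h01 : om ε r d v0 v1 ≠ 0 := hp.1.2.2.2.2.1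
  have hD := DelHalf_CR_ne_zero hε hd hsq hp
  refine eq_smul_adaptedVec hε hd hp hf hf0 hf1 ?_ ?_
  · rw [hf2, om_adaptedVec_v2 hε hd hp.1]
    unfold phiP phiM at *
    field_simp
    linear_combination -2 * DelHalf ε sq _ _ * hlam + 2 * om ε r d v0 v2 * om ε r d v1 v2 * hφ
  · rw [hf3, om_adaptedVec_v3 hε hd hp.1]
    unfold phiM phiP at *
    field_simp
    linear_combination 2 * om ε r d v2 v3 * hφφ

end Configuration

theorem statement_10_general (ε : ℂ) (d : ℕ)
    (hεd : (ε = 1 ∧ d = 1) ∨ (ε = -1 ∧ d = 0) ∨ (ε = 1 ∧ d = 0))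
    (r : ℕ)
    (sq : ℂ → ℂ) (hsq : ∀ z, sq z ^ 2 = z)
    (v0 v1 v2 v3 : Vc r d) (hp : Gen4 ε r d v0 v1 v2 v3)
    (Pi4 sPi lam mu : ℂ)
    (hPi : Pi4 = om ε r d v0 v1 * om ε r d v1 v2 * om ε r d v2 v0)
    (hsPi : sPi ^ 2 = Pi4)
    (hlam : lam = sPi / om ε r d v1 v0)
    (hmu : mu = lam⁻¹ * om ε r d v3 v2)
    (e' f' : Vc r d)
    (he'mem : e' ∈ Submodule.span ℂ ({v0, v1, v2, v3} : Set (Vc r d)))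
    (he'perp : om ε r d v0 e' = 0 ∧ om ε r d v1 e' = 0)
    (hf'mem : f' ∈ Submodule.span ℂ ({v0, v1, v2, v3} : Set (Vc r d)))
    (hf'perp : om ε r d v0 f' = 0 ∧ om ε r d v1 f' = 0)
    (he'2 : om ε r d e' v2 = lam)
    (he'3 : om ε r d e' v3
      = mu * phiM ε sq (CR1 ε r d v0 v1 v2 v3) (CR2 ε r d v0 v1 v2 v3))
    (hf'2 : om ε r d f' v2 = -lam)
    (hf'3 : om ε r d f' v3
      = ε * mu * phiP ε sq (CR1 ε r d v0 v1 v2 v3) (CR2 ε r d v0 v1 v2 v3))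
    (v4 : Vc r d) (hp5 : Conf5 ε r d v0 v1 v2 v3 v4)
    -- the cross-ratios α₁, α₂, β₁, β₂, γ₁, γ₂ of the 5-tuple
    (a1 a2 b1 b2 c1 c2 : ℂ)
    (ha1 : a1 = CR1 ε r d v0 v1 v2 v3) (ha2 : a2 = CR2 ε r d v0 v1 v2 v3)
    (hb1 : b1 = CR1 ε r d v0 v1 v2 v4) (hb2 : b2 = CR2 ε r d v0 v1 v2 v4)
    (hc1 : c1 = CR1 ε r d v0 v1 v3 v4) (hc2 : c2 = CR2 ε r d v0 v1 v3 v4)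
    -- ψ₋ and ψ₊
    (psm psp : ℂ)
    (hpsm : psm = -(phiM ε sq a1 a2) * Gam b1 b2 + (a2 * b1 / c1) * Gam c1 c2)
    (hpsp : psp = phiP ε sq a1 a2 * Gam b1 b2 + (a2 * b1 / c1) * Gam c1 c2) :
    om ε r d e' v4 = ε * (om ε r d v2 v4 / lam) * (psm / DelHalf ε sq a1 a2) ∧
    om ε r d f' v4 = (om ε r d v2 v4 / lam) * (psp / DelHalf ε sq a1 a2) := by
  have hε : ε * ε = 1 := by rcases hεd with ⟨rfl, -⟩ | ⟨rfl, -⟩ | ⟨rfl, -⟩ <;> norm_num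
  have hd : d = 1 → ε = 1 := by rcases hεd with ⟨rfl, -⟩ | ⟨-, rfl⟩ | ⟨rfl, -⟩ <;> simp
  obtain ⟨-, -, -, -, h01, h02, -, h12, -, -⟩ := hp.1
  have hlam_sq := sq_mul_om_of_sq_eq hε hd h01 (hPi ▸ hsPi) hlam
  have hlam0 : lam ≠ 0 := by
    rintro rfl
    simp [h02, h12, left_ne_zero_of_mul_eq_one hε, eq_comm] at hlam_sq
  have hmu' : mu = ε * om ε r d v2 v3 / lam := by
    rw [hmu, om_comm hε hd v3 v2]; field_simp
  subst ha1 ha2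
  have he' := eq_smul_adaptedVec_phiM hε hd hsq hp hlam_sq hlam0 he'mem he'perp.1 he'perp.2 he'2
    (by rw [he'3, hmu'])
  have hf' := eq_smul_adaptedVec_phiP hε hd hsq hp hlam_sq hlam0 hf'mem hf'perp.1 hf'perp.2 hf'2
    (by rw [hf'3, hmu']; linear_combination om ε r d v2 v3 / lam * phiP ε sq _ _ * hε)
  constructor
  · rw [he', om_smul_left, om_adaptedVec_v4 hε hd hp5, ← hb1, ← hb2, ← hc1, ← hc2, hpsm,
      smul_eq_mul]
    ring
  · rw [hf', om_smul_left, om_adaptedVec_v4 hε hd hp5, ← hb1, ← hb2, ← hc1, ← hc2, hpsp,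
      smul_eq_mul]
    ring

/-- Pairings of the adapted basis `e′, f′` of
`⟨v₀,v₁⟩^⊥ ∩ ⟨v₀,v₁,v₂,v₃⟩` against a fifth isotropic vector `v₄`, expressed through
the cross-ratios `α_j, β_j, γ_j` and the quantities `ψ_±`. -/
theorem statement_10 (ε : ℂ) (d : ℕ)
    (hεd : (ε = 1 ∧ d = 1) ∨ (ε = -1 ∧ d = 0) ∨ (ε = 1 ∧ d = 0))
    (r : ℕ) (hr1 : 1 ≤ r) (hr2 : ε = 1 ∧ d = 0 → 2 ≤ r)
    (sq : ℂ → ℂ) (hsq : ∀ z, sq z ^ 2 = z)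
    (v0 v1 v2 v3 : Vc r d) (hp : Gen4 ε r d v0 v1 v2 v3)
    (Pi4 sPi lam mu : ℂ)
    (hPi : Pi4 = om ε r d v0 v1 * om ε r d v1 v2 * om ε r d v2 v0)
    (hsPi : sPi ^ 2 = Pi4)
    (hlam : lam = sPi / om ε r d v1 v0)
    (hmu : mu = lam⁻¹ * om ε r d v3 v2)
    (e' f' : Vc r d)
    (he'mem : e' ∈ Submodule.span ℂ ({v0, v1, v2, v3} : Set (Vc r d)))
    (he'perp : om ε r d v0 e' = 0 ∧ om ε r d v1 e' = 0)
    (hf'mem : f' ∈ Submodule.span ℂ ({v0, v1, v2, v3} : Set (Vc r d)))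
    (hf'perp : om ε r d v0 f' = 0 ∧ om ε r d v1 f' = 0)
    (he'2 : om ε r d e' v2 = lam)
    (he'3 : om ε r d e' v3
      = mu * phiM ε sq (CR1 ε r d v0 v1 v2 v3) (CR2 ε r d v0 v1 v2 v3))
    (hf'2 : om ε r d f' v2 = -lam)
    (hf'3 : om ε r d f' v3
      = ε * mu * phiP ε sq (CR1 ε r d v0 v1 v2 v3) (CR2 ε r d v0 v1 v2 v3))
    (v4 : Vc r d) (hp5 : Conf5 ε r d v0 v1 v2 v3 v4)
    -- the cross-ratios α₁, α₂, β₁, β₂, γ₁, γ₂ of the 5-tuple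
    (a1 a2 b1 b2 c1 c2 : ℂ)
    (ha1 : a1 = CR1 ε r d v0 v1 v2 v3) (ha2 : a2 = CR2 ε r d v0 v1 v2 v3)
    (hb1 : b1 = CR1 ε r d v0 v1 v2 v4) (hb2 : b2 = CR2 ε r d v0 v1 v2 v4)
    (hc1 : c1 = CR1 ε r d v0 v1 v3 v4) (hc2 : c2 = CR2 ε r d v0 v1 v3 v4)
    -- ψ₋ and ψ₊
    (psm psp : ℂ)
    (hpsm : psm = -(phiM ε sq a1 a2) * Gam b1 b2 + (a2 * b1 / c1) * Gam c1 c2)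
    (hpsp : psp = phiP ε sq a1 a2 * Gam b1 b2 + (a2 * b1 / c1) * Gam c1 c2) :
    om ε r d e' v4 = ε * (om ε r d v2 v4 / lam) * (psm / DelHalf ε sq a1 a2) ∧
    om ε r d f' v4 = (om ε r d v2 v4 / lam) * (psp / DelHalf ε sq a1 a2) :=
  statement_10_general ε d hεd r sq hsq v0 v1 v2 v3 hp Pi4 sPi lam mu hPi hsPi hlam hmu e' f' he'mem
    he'perp hf'mem hf'perp he'2 he'3 hf'2 hf'3 v4 hp5 a1 a2 b1 b2 c1 c2 ha1 ha2 hb1 hb2 hc1 hc2 psm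
    psp hpsm hpsp
end DCM
end
end
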